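/- For every nonnegative integer b, the identity ∑_{j=1}^{b} (b − 1 + κ_{j−1} + κ_{b−j} − κ_b) = 0 holds. -/

import Mathlib

open Finset Filter Topology

/-- The `n`-th harmonic number `H_n = ∑_{i=1}^n 1/i`. -/
noncomputable def H (n : ℕ) : ℝ := ∑ i ∈ Finset.range n, (1 : ℝ) / (i + 1)

/-- `κ_n = 2(n+1)H_n - 4n`, the mean number of key comparisons for QuickSort on `n` keys. -/
noncomputable def κ (n : ℕ) : ℝ := 2 * (n + 1) * H n - 4 * n

/-! Both shifted sums `∑ κ (j - 1)` and `∑ κ (b - j)` are `∑_{k<b} κ_k`, so the identity is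
the QuickSort recurrence `2 ∑_{k<b} κ_k = b κ_b - b (b - 1)`, which follows by induction on `b`
from `H_{n+1} = H_n + 1/(n+1)`. -/

section ShiftedSums

variable {M : Type*} [AddCommMonoid M]

lemma Finset.sum_Icc_one_comp_sub_one (f : ℕ → M) (n : ℕ) :
    ∑ j ∈ Icc 1 n, f (j - 1) = ∑ k ∈ range n, f k := by
  rw [← Ico_add_one_right_eq_Icc, sum_Ico_eq_sum_range]
  simp

lemma Finset.sum_Icc_one_comp_sub (f : ℕ → M) (n : ℕ) :
    ∑ j ∈ Icc 1 n, f (n - j) = ∑ k ∈ range n, f k := by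
  rw [← sum_range_reflect, ← sum_Icc_one_comp_sub_one]
  refine sum_congr rfl fun j hj => ?_
  rw [mem_Icc] at hj
  congr 1
  omega

end ShiftedSums

lemma H_succ (n : ℕ) : H (n + 1) = H n + 1 / (n + 1) := by
  simp [H, sum_range_succ]

lemma two_mul_sum_range_κ (n : ℕ) :
    2 * ∑ k ∈ range n, κ k = n * κ n - n * ((n : ℝ) - 1) := by
  induction n with
  | zero => simp
  | succ n ih =>
    rw [sum_range_succ, mul_add, ih]
    simp only [κ, H_succ]
    push_cast
    field_simp
    ring

theorem basic_identity (b : ℕ) :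
    ∑ j ∈ Finset.Icc 1 b, ((b : ℝ) - 1 + κ (j - 1) + κ (b - j) - κ b) = 0 := by
  simp only [sum_sub_distrib, sum_add_distrib, sum_Icc_one_comp_sub_one κ,
    sum_Icc_one_comp_sub κ, sum_const, Nat.card_Icc, Nat.add_sub_cancel, nsmul_eq_mul]
  linarith [two_mul_sum_range_κ b]
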